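/- Let G be an ordered graph and H a spanning subgraph of G (with the inherited vertex and edge orders). Then for every edge e ∈ E(H), the position ht_H(e) of e in the height table of H is lexicographically less than or equal to its position ht_G(e) in the height table of G. -/

import Mathlib

open scoped Classical

namespace EO

/-- Auxiliary choice function for building the height table: given the list `prev` of the
(optional) entries at all earlier scanning positions, `htPick N G w k prev` is the entry at
scanning position `k`, namely the `w`-largest edge of `G` containing the column vertex
`⟨k % N⟩` of position `k` that does not occur among the earlier entries, if any exists. -/
noncomputable def htPick (N : ℕ) (G : SimpleGraph (Fin N)) (w : Sym2 (Fin N) → ℕ)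
    (k : ℕ) (prev : List (Option (Sym2 (Fin N)))) : Option (Sym2 (Fin N)) :=
  if hN : 0 < N then
    if h : ∃ e, (e ∈ G.edgeSet ∧ (⟨k % N, Nat.mod_lt k hN⟩ : Fin N) ∈ e ∧
          some e ∉ prev) ∧
        ∀ f, (f ∈ G.edgeSet ∧ (⟨k % N, Nat.mod_lt k hN⟩ : Fin N) ∈ f ∧
          some f ∉ prev) → w f ≤ w e
    then some h.choose else none
  else none

/-- The list of the first `k` entries of the height table of the ordered graph `G`
(vertex set `Fin N` with its natural vertex order, edge order given by the injective
weight `w`).  Scanning position `k` corresponds to row `k / N + 1` and column `⟨k % N⟩`,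
so scanning positions in increasing order of `k` is exactly scanning the table in
increasing lexicographic order (row first, then vertex order within a row). -/
noncomputable def htList (N : ℕ) (G : SimpleGraph (Fin N)) (w : Sym2 (Fin N) → ℕ) :
    ℕ → List (Option (Sym2 (Fin N)))
  | 0 => []
  | k + 1 => htList N G w k ++ [htPick N G w k (htList N G w k)]

/-- The entry of the height table of `G` at scanning position `k`: the `w`-largest
not-yet-entered edge containing the column vertex of position `k`, if any. -/
noncomputable def htEntry (N : ℕ) (G : SimpleGraph (Fin N)) (w : Sym2 (Fin N) → ℕ)
    (k : ℕ) : Option (Sym2 (Fin N)) :=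
  htPick N G w k (htList N G w k)

/-- The scanning index at which the edge `e` is entered into the height table
(junk value `0` if `e` is never entered; every edge of `G` is in fact entered exactly
once).  The lexicographic order on table positions corresponds exactly to the order of
scanning indices. -/
noncomputable def htIndex (N : ℕ) (G : SimpleGraph (Fin N)) (w : Sym2 (Fin N) → ℕ)
    (e : Sym2 (Fin N)) : ℕ :=
  if h : ∃ k, htEntry N G w k = some e then Nat.find h else 0

/-- The height (row, `1`-indexed) of the edge `e` in the height table of `G`. -/
noncomputable def height (N : ℕ) (G : SimpleGraph (Fin N)) (w : Sym2 (Fin N) → ℕ)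
    (e : Sym2 (Fin N)) : ℕ :=
  htIndex N G w e / N + 1

/-- The index of the column (vertex) of the edge `e` in the height table of `G`. -/
noncomputable def col (N : ℕ) (G : SimpleGraph (Fin N)) (w : Sym2 (Fin N) → ℕ)
    (e : Sym2 (Fin N)) : ℕ :=
  htIndex N G w e % N

/-- The column vertex of the edge `e` in the height table of `G` (for `N > 0`). -/
noncomputable def colV (N : ℕ) (hN : 0 < N) (G : SimpleGraph (Fin N))
    (w : Sym2 (Fin N) → ℕ) (e : Sym2 (Fin N)) : Fin N :=
  ⟨htIndex N G w e % N, Nat.mod_lt _ hN⟩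

/-- A list of edges is increasing (with respect to the edge order given by `w`) if
consecutive entries are strictly increasing. -/
def Increasing {V : Type*} (w : Sym2 V → ℕ) (l : List (Sym2 V)) : Prop :=
  l.Chain' fun a b => w a < w b

/-!
By induction on the scanning position `k`, every edge of `H` that `G` has placed before `k` has
been placed by `H` before `k`.  At the position `k` where `G` places such an edge `e`, if `H` has
not placed `e` yet, then the edges available to `H` at `k` (same column vertex) are, by the
induction hypothesis, available to `G` as well, and `e` is one of them.  As `e` is the `w`-largest
edge available to `G` and `w` is injective, `H` places `e` at `k` too.
-/

section HeightTable

variable {N : ℕ} {G H : SimpleGraph (Fin N)} {w : Sym2 (Fin N) → ℕ}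

def colVertex (hN : 0 < N) (k : ℕ) : Fin N := ⟨k % N, Nat.mod_lt k hN⟩

lemma colVertex_add_mul (hN : 0 < N) (v : Fin N) (j : ℕ) : colVertex hN (v + j * N) = v :=
  Fin.ext <| by simp [colVertex, Nat.mod_eq_of_lt v.isLt]

def IsAvailable (G : SimpleGraph (Fin N)) (w : Sym2 (Fin N) → ℕ) (hN : 0 < N) (k : ℕ)
    (e : Sym2 (Fin N)) : Prop :=
  e ∈ G.edgeSet ∧ colVertex hN k ∈ e ∧ some e ∉ htList N G w k

lemma mem_htList_iff {e : Sym2 (Fin N)} {k : ℕ} :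
    some e ∈ htList N G w k ↔ ∃ j < k, htEntry N G w j = some e := by
  induction k with
  | zero => simp [htList]
  | succ k ih =>
    simp only [htList, List.mem_append, List.mem_singleton, ih, Nat.lt_succ_iff_lt_or_eq,
      or_and_right, exists_or, exists_eq_left', htEntry, eq_comm]

lemma htEntry_spec (hN : 0 < N) {k : ℕ} {e : Sym2 (Fin N)} (h : htEntry N G w k = some e) :
    IsAvailable G w hN k e ∧ ∀ f, IsAvailable G w hN k f → w f ≤ w e := by
  rw [htEntry, htPick, dif_pos hN] at h
  split at h
  · rename_i hex
    obtain rfl : hex.choose = e := Option.some_injective _ h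
    exact hex.choose_spec
  · exact absurd h (Option.some_ne_none e).symm

lemma exists_htEntry_eq_some_of_isAvailable (hN : 0 < N) {k : ℕ} {e : Sym2 (Fin N)}
    (he : IsAvailable G w hN k e) : ∃ f, htEntry N G w k = some f := by
  have : Nonempty {f // IsAvailable G w hN k f} := ⟨⟨e, he⟩⟩
  obtain ⟨⟨f, hf⟩, hmax⟩ := Finite.exists_max fun f : {f // IsAvailable G w hN k f} => w f
  unfold htEntry htPick
  rw [dif_pos hN]
  split
  · exact ⟨_, rfl⟩
  · rename_i hnone
    exact absurd ⟨f, hf, fun g hg => hmax ⟨g, hg⟩⟩ hnone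

lemma eq_of_htEntry_eq_some {i j : ℕ} {f : Sym2 (Fin N)} (hi : htEntry N G w i = some f)
    (hj : htEntry N G w j = some f) : i = j := by
  have hN : 0 < N := f.out.1.pos
  by_contra hne
  rcases Nat.lt_or_gt_of_ne hne with hij | hji
  · exact (htEntry_spec hN hj).1.2.2 (mem_htList_iff.2 ⟨i, hij, hi⟩)
  · exact (htEntry_spec hN hi).1.2.2 (mem_htList_iff.2 ⟨j, hji, hj⟩)

/-- Every edge is eventually placed: otherwise it stays available at every position of the column
of one of its vertices, and infinitely many distinct edges would be placed there. -/
lemma exists_htEntry_eq_some {e : Sym2 (Fin N)} (he : e ∈ G.edgeSet) :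
    ∃ k, htEntry N G w k = some e := by
  by_contra! hnever
  obtain ⟨v, hv⟩ : ∃ v, v ∈ e := ⟨e.out.1, Sym2.out_fst_mem e⟩
  have hN : 0 < N := v.pos
  have havail : ∀ j : ℕ, IsAvailable G w hN (v + j * N) e := fun j =>
    ⟨he, (colVertex_add_mul hN v j).symm ▸ hv, fun hmem => by
      obtain ⟨i, -, hi⟩ := mem_htList_iff.1 hmem
      exact hnever i hi⟩
  choose F hF using fun j => exists_htEntry_eq_some_of_isAvailable hN (havail j)
  obtain ⟨i, j, hij, hFij⟩ := Finite.exists_ne_map_eq_of_infinite F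
  have hpos := eq_of_htEntry_eq_some (hF i) (hFij ▸ hF j)
  exact hij (Nat.eq_of_mul_eq_mul_right hN (Nat.add_left_cancel hpos))

lemma htIndex_lt_iff {e : Sym2 (Fin N)} (he : e ∈ G.edgeSet) {k : ℕ} :
    htIndex N G w e < k ↔ some e ∈ htList N G w k := by
  rw [htIndex, dif_pos (exists_htEntry_eq_some he), Nat.find_lt_iff, mem_htList_iff]

lemma mem_htList_of_le (hHG : H ≤ G) (hw : Function.Injective w) {k : ℕ} :
    ∀ {e : Sym2 (Fin N)}, e ∈ H.edgeSet →
      some e ∈ htList N G w k → some e ∈ htList N H w k := by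
  induction k with
  | zero => simp [htList]
  | succ k ih =>
    intro e he hmemG
    have hN : 0 < N := e.out.1.pos
    by_cases hmemH : some e ∈ htList N H w k
    · exact List.mem_append_left _ hmemH
    obtain ⟨j, hj, hGj⟩ := mem_htList_iff.1 hmemG
    rcases Nat.lt_succ_iff_lt_or_eq.1 hj with hj | rfl
    · exact absurd (ih he (mem_htList_iff.2 ⟨j, hj, hGj⟩)) hmemH
    obtain ⟨⟨-, hv, -⟩, hmaxG⟩ := htEntry_spec hN hGj
    have heH : IsAvailable H w hN j e := ⟨he, hv, hmemH⟩
    obtain ⟨f, hHj⟩ := exists_htEntry_eq_some_of_isAvailable hN heH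
    obtain ⟨⟨hfH, hfv, hfnot⟩, hmaxH⟩ := htEntry_spec hN hHj
    have hfG : IsAvailable G w hN j f :=
      ⟨SimpleGraph.edgeSet_mono hHG hfH, hfv, fun h => hfnot (ih hfH h)⟩
    obtain rfl : f = e := hw ((hmaxG f hfG).antisymm (hmaxH e heH))
    exact mem_htList_iff.2 ⟨j, hj, hHj⟩

end HeightTable

end EO

/-- Lemma 3.9.  Let `G` be an ordered graph and `H` a spanning subgraph
of `G` (same vertices, a subset of the edges, with the inherited vertex and edge orders).
Then every edge `e ∈ E(H)` is entered in the height table of `H` at a position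
lexicographically less than or equal to its position in the height table of `G`
(the scanning index order is exactly the lexicographic order on positions). -/
theorem stmt8 (N : ℕ) (G H : SimpleGraph (Fin N)) (hHG : H ≤ G)
    (w : Sym2 (Fin N) → ℕ) (hw : Function.Injective w)
    (e : Sym2 (Fin N)) (he : e ∈ H.edgeSet) :
    EO.htIndex N H w e ≤ EO.htIndex N G w e := by
  rw [← Nat.lt_succ_iff, EO.htIndex_lt_iff he]
  exact EO.mem_htList_of_le hHG hw he
    ((EO.htIndex_lt_iff (SimpleGraph.edgeSet_mono hHG he)).1 (Nat.lt_succ_self _))
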